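/- Given the smooth-fit system −γn₀A·x^{n₀} − A_y·x^{n₀} + x − Cˢ = 0 and −γn₀²A·x^{n₀−1} − n₀A_y·x^{n₀−1} + 1 = 0 both evaluated at x = F, the unique solution has constant free boundary F = n₀Cˢ/(n₀−1), and A satisfying γn₀A + A_y = ((n₀−1)/(n₀Cˢ))^{n₀−1}/n₀; with A(0) = 0 this gives A(y) = (1/(γn₀²))((n₀−1)/(n₀Cˢ))^{n₀−1}(1 − e^{−γn₀y}). -/

import Mathlib

/-!
Both smooth-fit equations involve `A` only through `Q = γ n₀ A + A'`; eliminating `Q` between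
them pins the free boundary to a constant, after which `Q` is a constant and `A` solves a linear
first-order ODE, integrated with the factor `e^{γ n₀ y}`.
-/

open Real

/-- Subtracting `x` times the second equation from `n` times the first leaves `n (x - C) = x`. -/
theorem eq_of_smooth_fit {n C Q x : ℝ} (hx : 0 < x) (hn : n ≠ 1)
    (h₁ : Q * x ^ n = x - C) (h₂ : n * Q * x ^ (n - 1) = 1) :
    x = n * C / (n - 1) ∧ Q = ((n - 1) / (n * C)) ^ (n - 1) / n := by
  have hn₀ : n ≠ 0 := by rintro rfl; simp at h₂
  have hn₁ : n - 1 ≠ 0 := sub_ne_zero.mpr hn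
  have hsplit : x ^ n = x ^ (n - 1) * x := by
    rw [← rpow_add_one hx.ne', sub_add_cancel]
  have hx_eq : x = n * C / (n - 1) := by
    rw [eq_div_iff hn₁]
    linear_combination x * h₂ - n * h₁ + n * Q * hsplit
  refine ⟨hx_eq, ?_⟩
  have hbase : (n - 1) / (n * C) = x⁻¹ := by rw [hx_eq, inv_div]
  rw [hbase, inv_rpow hx.le, eq_div_iff hn₀]
  exact eq_inv_of_mul_eq_one_left (by linear_combination h₂)

theorem eq_of_linear_ode {A : ℝ → ℝ} {k b : ℝ} (hk : k ≠ 0) (hA : Differentiable ℝ A)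
    (hA0 : A 0 = 0) (hode : ∀ y, k * A y + deriv A y = b) (y : ℝ) :
    A y = b / k * (1 - exp (-(k * y))) := by
  set g : ℝ → ℝ := fun t => (A t - b / k) * exp (k * t)
  have hg : ∀ t, HasDerivAt g 0 t := by
    intro t
    have hexp : HasDerivAt (fun s => exp (k * s)) (exp (k * t) * k) t :=
      ((hasDerivAt_id t).const_mul k).exp.congr_deriv (by simp)
    refine (((hA t).hasDerivAt.sub_const (b / k)).mul hexp).congr_deriv ?_
    field_simp
    linear_combination exp (k * t) * hode t
  have hconst : g y = g 0 :=
    is_const_of_deriv_eq_zero (fun t => (hg t).differentiableAt) (fun t => (hg t).deriv) y 0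
  simp only [g, hA0, mul_zero, exp_zero, mul_one] at hconst
  rw [exp_neg]
  field_simp at hconst ⊢
  linear_combination hconst

theorem stmt_18_general (γ Cs n₀ : ℝ) (hγ : 0 < γ) (hn₀ : 1 < n₀)
    (A F : ℝ → ℝ) (hA : Differentiable ℝ A) (hF : ∀ y : ℝ, 0 < F y) (hA0 : A 0 = 0)
    (heq1 : ∀ y : ℝ,
      -(γ * n₀) * A y * F y ^ (n₀ : ℝ) - deriv A y * F y ^ (n₀ : ℝ) + F y - Cs = 0)
    (heq2 : ∀ y : ℝ,
      -(γ * n₀^2) * A y * F y ^ (n₀ - 1) - n₀ * deriv A y * F y ^ (n₀ - 1) + 1 = 0) :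
    ∀ y : ℝ,
      F y = n₀ * Cs / (n₀ - 1) ∧
      γ * n₀ * A y + deriv A y = ((n₀ - 1) / (n₀ * Cs)) ^ (n₀ - 1) / n₀ ∧
      A y = 1 / (γ * n₀^2) * ((n₀ - 1) / (n₀ * Cs)) ^ (n₀ - 1) *
        (1 - Real.exp (-(γ * n₀ * y))) := by
  have hfit : ∀ y, F y = n₀ * Cs / (n₀ - 1) ∧
      γ * n₀ * A y + deriv A y = ((n₀ - 1) / (n₀ * Cs)) ^ (n₀ - 1) / n₀ := fun y =>
    eq_of_smooth_fit (hF y) hn₀.ne' (by linear_combination -heq1 y)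
      (by linear_combination -heq2 y)
  have hγn₀ : γ * n₀ ≠ 0 := by positivity
  intro y
  refine ⟨(hfit y).1, (hfit y).2, ?_⟩
  rw [eq_of_linear_ode hγn₀ hA hA0 (fun t => (hfit t).2) y]
  ring

/-- The smooth-fit system
−γn₀A(y)F(y)^{n₀} − A'(y)F(y)^{n₀} + F(y) − Cˢ = 0 and
−γn₀²A(y)F(y)^{n₀−1} − n₀A'(y)F(y)^{n₀−1} + 1 = 0, together with A(0) = 0,
forces the constant free boundary F ≡ n₀Cˢ/(n₀−1), the ODE
γn₀A + A' = ((n₀−1)/(n₀Cˢ))^{n₀−1}/n₀, and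
A(y) = (1/(γn₀²))((n₀−1)/(n₀Cˢ))^{n₀−1}(1 − e^{−γn₀y}). -/
theorem stmt_18 (γ Cs n₀ : ℝ) (hγ : 0 < γ) (hCs : 0 < Cs) (hn₀ : 1 < n₀)
    (A F : ℝ → ℝ) (hA : Differentiable ℝ A) (hF : ∀ y : ℝ, 0 < F y) (hA0 : A 0 = 0)
    (heq1 : ∀ y : ℝ,
      -(γ * n₀) * A y * F y ^ (n₀ : ℝ) - deriv A y * F y ^ (n₀ : ℝ) + F y - Cs = 0)
    (heq2 : ∀ y : ℝ,
      -(γ * n₀^2) * A y * F y ^ (n₀ - 1) - n₀ * deriv A y * F y ^ (n₀ - 1) + 1 = 0) :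
    ∀ y : ℝ,
      F y = n₀ * Cs / (n₀ - 1) ∧
      γ * n₀ * A y + deriv A y = ((n₀ - 1) / (n₀ * Cs)) ^ (n₀ - 1) / n₀ ∧
      A y = 1 / (γ * n₀^2) * ((n₀ - 1) / (n₀ * Cs)) ^ (n₀ - 1) *
        (1 - Real.exp (-(γ * n₀ * y))) :=
  stmt_18_general γ Cs n₀ hγ hn₀ A F hA hF hA0 heq1 heq2
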